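/- arXiv:math/9807148 — 2 statements merged into one kernel-verified Lean document; each statement's English description precedes it below -/
import Mathlib

section
/- Let n ≥ 1 be an integer, b ≥ 0 a real number, and λ > 0 a real number. Set μ'' := 2λ(n + b) + λ². Then the 3×3 real matrix M := μ''·I + A, where A has rows (λ, 0, −λ^{3/2}), (0, −λ, λ^{3/2}), (−λ^{−1/2}(b+2n), λ^{−1/2}·b, 2n), has characteristic polynomial (X − μ'')·(X − (μ'' + n + t))·(X − (μ'' + n − t)) where t := √(n² + 2λ(n+b) + λ²); in particular its eigenvalues are μ'' and μ'' + n ± √(n² + 2λ(n+b) + λ²). -/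
/-!
The scalar part `μ'' • 1` only shifts the characteristic polynomial, `X ↦ X - μ''`. The remaining
block has trace `2n`, sum of principal `2 × 2` minors `-μ''` and determinant `0`, so its
characteristic polynomial is `X (X² - 2nX - μ'')`, whose nonzero roots are `n ± t` because
`t² = n² + μ''`.
-/

open Polynomial

namespace Matrix

theorem charpoly_smul_one_add {R n : Type*} [CommRing R] [Fintype n] [DecidableEq n]
    (c : R) (A : Matrix n n R) : (c • 1 + A).charpoly = A.charpoly.comp (X - C c) := by
  simpa [sub_eq_add_neg, add_comm, smul_one_eq_diagonal] using A.charpoly_sub_scalar (-c)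

end Matrix

theorem charpoly_doubleHeisenberg_laplacian_block {K : Type*} [Field K] {lam s : K} (b m : K)
    (hs : s * s = lam) (hs0 : s ≠ 0) :
    !![lam, 0, -(lam * s);
       0, -lam, lam * s;
       -(s⁻¹ * (b + 2 * m)), s⁻¹ * b, 2 * m].charpoly =
      X ^ 3 - C (2 * m) * X ^ 2 - C (2 * lam * (m + b) + lam ^ 2) * X := by
  have hCs : C s * C s⁻¹ = (1 : K[X]) := by rw [← C_mul, mul_inv_cancel₀ hs0, C_1]
  rw [Matrix.charpoly, Matrix.det_fin_three]
  simp only [← hs, Matrix.charmatrix_apply_eq, Matrix.charmatrix_apply_ne,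
    Matrix.of_apply, Matrix.cons_val', Matrix.cons_val_zero, Matrix.cons_val_one, Matrix.cons_val,
    Matrix.cons_val_fin_one, ne_eq, Fin.reduceEq, not_false_eq_true, map_mul, map_neg, map_add,
    map_zero, map_pow, map_ofNat]
  linear_combination -(2 * C s ^ 2 * (C m + C b) * X + 2 * C s ^ 4 * C m) * hCs

namespace Polynomial

theorem X_mul_X_sub_C_add_mul_X_sub_C_sub {R : Type*} [CommRing R] (m t : R) :
    X * (X - C (m + t)) * (X - C (m - t)) = X ^ 3 - C (2 * m) * X ^ 2 - C (t ^ 2 - m ^ 2) * X := by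
  simp only [map_add, map_sub, map_mul, map_pow, map_ofNat]
  ring

end Polynomial

theorem double_heisenberg_laplacian_one_forms_charpoly_general (n : ℕ) (b lam : ℝ)
    (hb : 0 ≤ b) (hlam : 0 < lam)
    (μ'' : ℝ) (hμ : μ'' = 2 * lam * (n + b) + lam ^ 2)
    (t : ℝ) (ht : t = Real.sqrt ((n : ℝ) ^ 2 + 2 * lam * (n + b) + lam ^ 2))
    (M : Matrix (Fin 3) (Fin 3) ℝ)
    (hM : M = μ'' • (1 : Matrix (Fin 3) (Fin 3) ℝ) +
      !![lam, 0, -(lam * Real.sqrt lam);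
         0, -lam, lam * Real.sqrt lam;
         -((Real.sqrt lam)⁻¹ * (b + 2 * n)), (Real.sqrt lam)⁻¹ * b, 2 * (n : ℝ)]) :
    M.charpoly =
      (X - C μ'') * (X - C (μ'' + n + t)) * (X - C (μ'' + n - t)) := by
  have ht_sq : t ^ 2 - (n : ℝ) ^ 2 = μ'' := by
    rw [ht, hμ, Real.sq_sqrt (by positivity)]
    ring
  have hblock : M.charpoly = (X * (X - C ((n : ℝ) + t)) * (X - C ((n : ℝ) - t))).comp (X - C μ'') := by
    rw [hM, Matrix.charpoly_smul_one_add, X_mul_X_sub_C_add_mul_X_sub_C_sub, ht_sq, hμ,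
      charpoly_doubleHeisenberg_laplacian_block b n (Real.mul_self_sqrt hlam.le) (Real.sqrt_pos.2 hlam).ne']
  rw [hblock]
  simp only [mul_comp, sub_comp, add_comp, X_comp, C_comp, map_add, map_sub]
  ring

/-- The matrix of the Laplacian on 1-forms on the double Heisenberg group `D^{4n+2}`,
restricted to the invariant subspace spanned by `Σ w_j`, `Σ w_j'`, `λ₁τ^{w₁} + λ₂τ^{w₂}`,
has characteristic polynomial `(X − μ'')(X − (μ'' + n + t))(X − (μ'' + n − t))` with
`t = √(n² + 2λ(n+b) + λ²)`; in particular its eigenvalues are `μ''` and `μ'' + n ± t`. -/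
theorem double_heisenberg_laplacian_one_forms_charpoly (n : ℕ) (hn : 1 ≤ n) (b lam : ℝ)
    (hb : 0 ≤ b) (hlam : 0 < lam)
    (μ'' : ℝ) (hμ : μ'' = 2 * lam * (n + b) + lam ^ 2)
    (t : ℝ) (ht : t = Real.sqrt ((n : ℝ) ^ 2 + 2 * lam * (n + b) + lam ^ 2))
    (M : Matrix (Fin 3) (Fin 3) ℝ)
    (hM : M = μ'' • (1 : Matrix (Fin 3) (Fin 3) ℝ) +
      !![lam, 0, -(lam * Real.sqrt lam);
         0, -lam, lam * Real.sqrt lam;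
         -((Real.sqrt lam)⁻¹ * (b + 2 * n)), (Real.sqrt lam)⁻¹ * b, 2 * (n : ℝ)]) :
    M.charpoly =
      (X - C μ'') * (X - C (μ'' + n + t)) * (X - C (μ'' + n - t)) :=
  double_heisenberg_laplacian_one_forms_charpoly_general n b lam hb hlam μ'' hμ t ht M hM
end

section
/- For every real t > 0 and all i ≠ j with 1 ≤ i, j ≤ n, the operators d(t) and U_{ij} on P_n ⊗ Λ commute: d(t) ∘ U_{ij} = U_{ij} ∘ d(t). -/
open scoped TensorProduct

noncomputable section

namespace HeisenbergModel

variable (n : ℕ)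

/-- Algebraic model of anti-Fock space: the polynomial algebra `ℂ[x_1,…,x_n]`. -/
abbrev P := MvPolynomial (Fin n) ℂ

/-- The `(2n+1)`-dimensional coefficient space with distinguished basis
`τ^1,…,τ^n, τ^{1̄},…,τ^{n̄}, τ^w`. -/
abbrev Vc := Fin (2 * n + 1) → ℂ

/-- The exterior algebra `Λ = ⋀ V`. -/
abbrev Lam := ExteriorAlgebra ℂ (Vc n)

/-- The space `P_n ⊗ Λ` on which all operators act. -/
abbrev PL := P n ⊗[ℂ] Lam n

/-- Index of the basis vector `τ^j`. -/
def idx1 (j : Fin n) : Fin (2 * n + 1) := ⟨j.1, by omega⟩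

/-- Index of the basis vector `τ^{j̄}`. -/
def idx2 (j : Fin n) : Fin (2 * n + 1) := ⟨n + j.1, by omega⟩

/-- Index of the basis vector `τ^w`. -/
def idxw : Fin (2 * n + 1) := ⟨2 * n, by omega⟩

/-- The distinguished basis vectors of `V`. -/
def tau (i : Fin (2 * n + 1)) : Vc n := Pi.single i 1

/-- The dual-basis functionals on `V`. -/
def dualf (i : Fin (2 * n + 1)) : Module.Dual ℂ (Vc n) := LinearMap.proj i

/-- Annihilation operator `a_j = ∂/∂x_j` on `P_n`. -/
def aOp (j : Fin n) : P n →ₗ[ℂ] P n := (MvPolynomial.pderiv j).toLinearMap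

/-- Creation operator `a_j^* = (multiplication by x_j)` on `P_n`. -/
def aStarOp (j : Fin n) : P n →ₗ[ℂ] P n := LinearMap.mulLeft ℂ (MvPolynomial.X j)

/-- Left exterior multiplication `e(v)` on `Λ`. -/
def eMulV (v : Vc n) : Lam n →ₗ[ℂ] Lam n := LinearMap.mulLeft ℂ (ExteriorAlgebra.ι ℂ v)

/-- Interior multiplication (left contraction) by a dual functional on `Λ`. -/
def iMulF (f : Module.Dual ℂ (Vc n)) : Lam n →ₗ[ℂ] Lam n :=
  CliffordAlgebra.contractLeft (Q := (0 : QuadraticForm ℂ (Vc n))) f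

/-- Lift an operator on `P_n` to `P_n ⊗ Λ` (acting on the first factor). -/
def onP (f : P n →ₗ[ℂ] P n) : PL n →ₗ[ℂ] PL n := LinearMap.rTensor (Lam n) f

/-- Lift an operator on `Λ` to `P_n ⊗ Λ` (acting on the second factor). -/
def onL (f : Lam n →ₗ[ℂ] Lam n) : PL n →ₗ[ℂ] PL n := LinearMap.lTensor (P n) f

/-- `a_j` acting on `P_n ⊗ Λ`. -/
def A (j : Fin n) : PL n →ₗ[ℂ] PL n := onP n (aOp n j)

/-- `a_j^*` acting on `P_n ⊗ Λ`. -/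
def Astar (j : Fin n) : PL n →ₗ[ℂ] PL n := onP n (aStarOp n j)

/-- `e(τ^j)` acting on `P_n ⊗ Λ`. -/
def E1 (j : Fin n) : PL n →ₗ[ℂ] PL n := onL n (eMulV n (tau n (idx1 n j)))

/-- `e(τ^{j̄})` acting on `P_n ⊗ Λ`. -/
def E2 (j : Fin n) : PL n →ₗ[ℂ] PL n := onL n (eMulV n (tau n (idx2 n j)))

/-- `e(τ^w)` acting on `P_n ⊗ Λ`. -/
def Ew : PL n →ₗ[ℂ] PL n := onL n (eMulV n (tau n (idxw n)))

/-- `i(Z_j)` acting on `P_n ⊗ Λ`. -/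
def I1 (j : Fin n) : PL n →ₗ[ℂ] PL n := onL n (iMulF n (dualf n (idx1 n j)))

/-- `i(Z_{j̄})` acting on `P_n ⊗ Λ`. -/
def I2 (j : Fin n) : PL n →ₗ[ℂ] PL n := onL n (iMulF n (dualf n (idx2 n j)))

/-- `i(W)` acting on `P_n ⊗ Λ`. -/
def Iw : PL n →ₗ[ℂ] PL n := onL n (iMulF n (dualf n (idxw n)))

/-- `θ_j(t) = −√(−1)·√t·(e(τ^j) a_j^* + e(τ^{j̄}) a_j) − √(−1)·e(τ^j) e(τ^{j̄}) i(W)`. -/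
def theta (t : ℝ) (j : Fin n) : PL n →ₗ[ℂ] PL n :=
  (-(Complex.I * (Real.sqrt t : ℝ))) • (E1 n j ∘ₗ Astar n j + E2 n j ∘ₗ A n j)
    - Complex.I • (E1 n j ∘ₗ E2 n j ∘ₗ Iw n)

/-- `θ_j^†(t) = √(−1)·√t·(i(Z_j) a_j + i(Z_{j̄}) a_j^*) + √(−1)·e(τ^w) i(Z_{j̄}) i(Z_j)`. -/
def thetaDag (t : ℝ) (j : Fin n) : PL n →ₗ[ℂ] PL n :=
  (Complex.I * (Real.sqrt t : ℝ)) • (I1 n j ∘ₗ A n j + I2 n j ∘ₗ Astar n j)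
    + Complex.I • (Ew n ∘ₗ I2 n j ∘ₗ I1 n j)

/-- `d(t) = Σ_j θ_j(t) − √(−1)·t·e(τ^w)`. -/
def dOp (t : ℝ) : PL n →ₗ[ℂ] PL n :=
  (∑ j : Fin n, theta n t j) - (Complex.I * (t : ℝ)) • Ew n

/-- `U_{jj} = a_j^* a_j − e(τ^j) i(Z_j) + e(τ^{j̄}) i(Z_{j̄})`. -/
def Udiag (j : Fin n) : PL n →ₗ[ℂ] PL n :=
  Astar n j ∘ₗ A n j - E1 n j ∘ₗ I1 n j + E2 n j ∘ₗ I2 n j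

/-- The `(i,j)` transposition operator `U_{ij} = a_i^* a_j − e(τ^j) i(Z_i) + e(τ^{ī}) i(Z_{j̄})`. -/
def Uoff (i j : Fin n) : PL n →ₗ[ℂ] PL n :=
  Astar n i ∘ₗ A n j - E1 n j ∘ₗ I1 n i + E2 n i ∘ₗ I2 n j

/-- The degree-`p` component `Λ^p` of the exterior algebra, as a submodule. -/
def LamP (p : ℕ) : Submodule ℂ (Lam n) :=
  LinearMap.range (ExteriorAlgebra.ι ℂ : Vc n →ₗ[ℂ] Lam n) ^ p

/-- The subspace `P_n ⊗ Λ^p` of `P_n ⊗ Λ`. -/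
def Wp (p : ℕ) : Submodule ℂ (PL n) :=
  LinearMap.range (TensorProduct.map (LinearMap.id : P n →ₗ[ℂ] P n) (LamP n p).subtype)

/-- The simultaneous eigenspace `V^{p,n,γ} = {v ∈ P_n ⊗ Λ^p : U_{jj} v = γ_j v for all j}`. -/
def Vpγ (p : ℕ) (γ : Fin n → ℤ) : Submodule ℂ (PL n) :=
  Wp n p ⊓ ⨅ j : Fin n, Module.End.eigenspace (Udiag n j) ((γ j : ℂ))

end HeisenbergModel

/-!
Commutation with `U_{ij}` is a derivation of the operator algebra. By the canonical
(anti)commutation relations it acts on the generators by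
`a_q ↦ δ_{iq} a_j`, `a_p^* ↦ -δ_{pj} a_i^*`, `e(τ^q) ↦ δ_{iq} e(τ^j)`,
`e(τ^{p̄}) ↦ -δ_{pj} e(τ^{ī})`, and it kills `i(W)` and `e(τ^w)`. Writing `θ_{p,q}` for `θ` with
`a^*` and `τ̄` indexed by `p` and `a` and `τ` indexed by `q`, so that `θ_k = θ_{k,k}`, this gives
`[θ_{p,q}, U_{ij}] = δ_{iq} θ_{p,j} - δ_{pj} θ_{i,q}`. Summed over `p = q = k` the two terms
cancel, so `[d(t), U_{ij}] = 0`.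
-/

/- Here `⁅x, y⁆` is the ring commutator `x * y - y * x`. On `Module.End ℂ (P_n ⊗ Λ)` the generic
ring and Lie-ring lemmas (`sub_lie`, `mul_neg`, `sub_zero`, ...) do not rewrite, because the
`AddCommGroup` instance of a tensor product unfolds to its `AddCommMonoid` instance only at
default transparency; stated for `Module.End R M` with `M` a variable, they do. -/
namespace Module.End

variable {R M : Type*} [CommRing R] [AddCommGroup M] [Module R M]

protected theorem add_lie (x y z : Module.End R M) : ⁅x + y, z⁆ = ⁅x, z⁆ + ⁅y, z⁆ := by
  simp only [Ring.lie_def, add_mul, mul_add]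
  abel

protected theorem sub_lie (x y z : Module.End R M) : ⁅x - y, z⁆ = ⁅x, z⁆ - ⁅y, z⁆ := by
  simp only [Ring.lie_def, sub_mul, mul_sub]
  abel

protected theorem lie_add (x y z : Module.End R M) : ⁅x, y + z⁆ = ⁅x, y⁆ + ⁅x, z⁆ := by
  simp only [Ring.lie_def, add_mul, mul_add]
  abel

protected theorem lie_sub (x y z : Module.End R M) : ⁅x, y - z⁆ = ⁅x, y⁆ - ⁅x, z⁆ := by
  simp only [Ring.lie_def, sub_mul, mul_sub]
  abel

protected theorem smul_lie (c : R) (x y : Module.End R M) : ⁅c • x, y⁆ = c • ⁅x, y⁆ := by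
  simp only [Ring.lie_def, smul_mul_assoc, mul_smul_comm, smul_sub]

protected theorem mul_lie (x y z : Module.End R M) : ⁅x * y, z⁆ = x * ⁅y, z⁆ + ⁅x, z⁆ * y := by
  simp only [Ring.lie_def]
  noncomm_ring

protected theorem sum_lie {ι : Type*} (s : Finset ι) (f : ι → Module.End R M)
    (z : Module.End R M) : ⁅∑ k ∈ s, f k, z⁆ = ∑ k ∈ s, ⁅f k, z⁆ := by
  simp only [Ring.lie_def, Finset.sum_mul, Finset.mul_sum, Finset.sum_sub_distrib]

end Module.End

namespace ExteriorAlgebra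

open LinearMap CliffordAlgebra

variable {R M : Type*} [CommRing R] [AddCommGroup M] [Module R M]

theorem lie_mulLeft_ι_mulLeft_ι_mul_contractLeft (v w : M) (f : Module.Dual R M) :
    ⁅mulLeft R (ι R v), mulLeft R (ι R w) * contractLeft (Q := 0) f⁆
      = -(f v • mulLeft R (ι R w)) := by
  refine LinearMap.ext fun x => ?_
  have hvw : ι R v * ι R w = -(ι R w * ι R v) := eq_neg_of_add_eq_zero_left (ι_add_mul_swap v w)
  simp only [Ring.lie_def, Module.End.mul_apply, LinearMap.sub_apply, LinearMap.neg_apply,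
    LinearMap.smul_apply, mulLeft_apply, contractLeft_ι_mul, ← mul_assoc, hvw, mul_sub,
    mul_smul_comm]
  rw [show CliffordAlgebra.ι (0 : QuadraticForm R M) v = ι R v from rfl, neg_mul]
  abel

theorem lie_contractLeft_mulLeft_ι_mul_contractLeft (g f : Module.Dual R M) (w : M) :
    ⁅contractLeft (Q := 0) g, mulLeft R (ι R w) * contractLeft (Q := 0) f⁆
      = g w • contractLeft (Q := 0) f := by
  refine LinearMap.ext fun x => ?_
  simp only [Ring.lie_def, Module.End.mul_apply, LinearMap.sub_apply,
    LinearMap.smul_apply, mulLeft_apply, contractLeft_ι_mul, contractLeft_comm g f]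
  noncomm_ring

end ExteriorAlgebra

namespace MvPolynomial

open LinearMap

variable {σ R : Type*} [CommRing R]

theorem pderiv_pderiv_comm (i j : σ) (p : MvPolynomial σ R) :
    pderiv i (pderiv j p) = pderiv j (pderiv i p) := by
  classical
  induction p using MvPolynomial.induction_on with
  | C c => simp
  | add p q hp hq => simp only [map_add, hp, hq]
  | mul_X p k hp =>
    simp only [pderiv_mul, map_add, hp, pderiv_X, Pi.single_apply, apply_ite (pderiv _),
      map_zero, pderiv_one, ite_self, mul_zero, add_zero]
    ring

variable [DecidableEq σ]

theorem lie_pderiv_mulLeft_X_mul_pderiv (q i j : σ) :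
    ⁅(pderiv (R := R) q).toLinearMap, mulLeft R (X i) * (pderiv j).toLinearMap⁆
      = (if i = q then 1 else 0 : R) • (pderiv (R := R) j).toLinearMap := by
  refine LinearMap.ext fun f => ?_
  simp only [Ring.lie_def, Module.End.mul_apply, LinearMap.sub_apply, LinearMap.smul_apply,
    mulLeft_apply, Derivation.coeFn_coe, pderiv_mul, pderiv_X, Pi.single_apply,
    pderiv_pderiv_comm q j]
  split_ifs <;> simp only [one_smul, zero_smul, one_mul, zero_mul] <;> ring

theorem lie_mulLeft_X_mulLeft_X_mul_pderiv (p i j : σ) :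
    ⁅(mulLeft R (X p) : Module.End R (MvPolynomial σ R)),
        mulLeft R (X i) * (pderiv (R := R) j).toLinearMap⁆
      = -((if p = j then 1 else 0 : R) • mulLeft R (X i : MvPolynomial σ R)) := by
  refine LinearMap.ext fun f => ?_
  simp only [Ring.lie_def, Module.End.mul_apply, LinearMap.sub_apply, LinearMap.neg_apply,
    LinearMap.smul_apply, mulLeft_apply, Derivation.coeFn_coe, pderiv_mul, pderiv_X,
    Pi.single_apply]
  split_ifs <;> simp only [one_smul, zero_smul, one_mul, zero_mul, neg_zero] <;> ring

end MvPolynomial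

namespace HeisenbergModel

open LinearMap

section Commutators

variable {n : ℕ}

theorem idx1_injective : Function.Injective (idx1 n) := fun k l h => by
  simpa [idx1, Fin.ext_iff] using h

theorem idx2_injective : Function.Injective (idx2 n) := fun k l h => by
  simpa [idx2, Fin.ext_iff] using h

theorem idx1_ne_idx2 (k l : Fin n) : idx1 n k ≠ idx2 n l := by
  simp only [idx1, idx2, ne_eq, Fin.mk.injEq]
  omega

theorem idx1_ne_idxw (k : Fin n) : idx1 n k ≠ idxw n := by
  simp only [idx1, idxw, ne_eq, Fin.mk.injEq]
  omega

theorem idx2_ne_idxw (k : Fin n) : idx2 n k ≠ idxw n := by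
  simp only [idx2, idxw, ne_eq, Fin.mk.injEq]
  omega

theorem dualf_tau (a b : Fin (2 * n + 1)) : dualf n a (tau n b) = if a = b then 1 else 0 := by
  simp [dualf, tau, Pi.single_apply]

theorem onP_lie (f g : Module.End ℂ (P n)) : onP n ⁅f, g⁆ = ⁅onP n f, onP n g⁆ := by
  simp only [Ring.lie_def, onP, rTensor_sub, rTensor_mul]

theorem onL_lie (f g : Module.End ℂ (Lam n)) : onL n ⁅f, g⁆ = ⁅onL n f, onL n g⁆ := by
  simp only [Ring.lie_def, onL, lTensor_sub, lTensor_mul]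

theorem lie_onP_onL (f : Module.End ℂ (P n)) (g : Module.End ℂ (Lam n)) :
    ⁅onP n f, onL n g⁆ = 0 := by
  rw [Ring.lie_def, sub_eq_zero]
  simp only [onP, onL, Module.End.mul_eq_comp, rTensor_comp_lTensor, lTensor_comp_rTensor]

theorem lie_onL_onP (g : Module.End ℂ (Lam n)) (f : Module.End ℂ (P n)) :
    ⁅onL n g, onP n f⁆ = 0 := by
  rw [Ring.lie_def, sub_eq_zero]
  simp only [onP, onL, Module.End.mul_eq_comp, rTensor_comp_lTensor, lTensor_comp_rTensor]

def UoffP (i j : Fin n) : Module.End ℂ (P n) := aStarOp n i * aOp n j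

def UoffL (i j : Fin n) : Module.End ℂ (Lam n) :=
  eMulV n (tau n (idx2 n i)) * iMulF n (dualf n (idx2 n j))
    - eMulV n (tau n (idx1 n j)) * iMulF n (dualf n (idx1 n i))

theorem Uoff_eq_onP_add_onL (i j : Fin n) :
    Uoff n i j = onP n (UoffP i j) + onL n (UoffL i j) := by
  simp only [Uoff, UoffP, UoffL, Astar, A, E1, E2, I1, I2, onP, onL, Module.End.mul_eq_comp,
    rTensor_comp, lTensor_comp, lTensor_sub]
  abel

theorem lie_onP_Uoff (f : Module.End ℂ (P n)) (i j : Fin n) :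
    ⁅onP n f, Uoff n i j⁆ = onP n ⁅f, UoffP i j⁆ := by
  rw [Uoff_eq_onP_add_onL, Module.End.lie_add, lie_onP_onL, add_zero, onP_lie]

theorem lie_onL_Uoff (g : Module.End ℂ (Lam n)) (i j : Fin n) :
    ⁅onL n g, Uoff n i j⁆ = onL n ⁅g, UoffL i j⁆ := by
  rw [Uoff_eq_onP_add_onL, Module.End.lie_add, lie_onL_onP, zero_add, onL_lie]

theorem lie_eMulV_UoffL (v : Vc n) (i j : Fin n) :
    ⁅eMulV n v, UoffL i j⁆ = dualf n (idx1 n i) v • eMulV n (tau n (idx1 n j))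
      - dualf n (idx2 n j) v • eMulV n (tau n (idx2 n i)) := by
  rw [UoffL, Module.End.lie_sub]
  simp only [eMulV, iMulF, ExteriorAlgebra.lie_mulLeft_ι_mulLeft_ι_mul_contractLeft]
  abel

theorem lie_iMulF_UoffL (g : Module.Dual ℂ (Vc n)) (i j : Fin n) :
    ⁅iMulF n g, UoffL i j⁆ = g (tau n (idx2 n i)) • iMulF n (dualf n (idx2 n j))
      - g (tau n (idx1 n j)) • iMulF n (dualf n (idx1 n i)) := by
  rw [UoffL, Module.End.lie_sub]
  simp only [eMulV, iMulF, ExteriorAlgebra.lie_contractLeft_mulLeft_ι_mul_contractLeft]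

theorem lie_A_Uoff (q i j : Fin n) :
    ⁅A n q, Uoff n i j⁆ = (if i = q then 1 else 0 : ℂ) • A n j := by
  rw [A, lie_onP_Uoff, UoffP, aOp, aOp, aStarOp, MvPolynomial.lie_pderiv_mulLeft_X_mul_pderiv]
  exact rTensor_smul _ _ _

theorem lie_Astar_Uoff (p i j : Fin n) :
    ⁅Astar n p, Uoff n i j⁆ = -((if p = j then 1 else 0 : ℂ) • Astar n i) := by
  rw [Astar, lie_onP_Uoff, UoffP, aOp, aStarOp, aStarOp,
    MvPolynomial.lie_mulLeft_X_mulLeft_X_mul_pderiv, onP, rTensor_neg, rTensor_smul]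
  rfl

theorem lie_E1_Uoff (q i j : Fin n) :
    ⁅E1 n q, Uoff n i j⁆ = (if i = q then 1 else 0 : ℂ) • E1 n j := by
  rw [E1, lie_onL_Uoff, lie_eMulV_UoffL, dualf_tau, dualf_tau, if_neg (idx1_ne_idx2 q j).symm,
    zero_smul, sub_zero]
  simp only [idx1_injective.eq_iff]
  exact lTensor_smul _ _ _

theorem lie_E2_Uoff (p i j : Fin n) :
    ⁅E2 n p, Uoff n i j⁆ = -((if p = j then 1 else 0 : ℂ) • E2 n i) := by
  rw [E2, lie_onL_Uoff, lie_eMulV_UoffL, dualf_tau, dualf_tau, if_neg (idx1_ne_idx2 i p),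
    zero_smul, zero_sub]
  simp only [idx2_injective.eq_iff.trans eq_comm]
  rw [onL, lTensor_neg, lTensor_smul]
  rfl

theorem lie_Ew_Uoff (i j : Fin n) : ⁅Ew n, Uoff n i j⁆ = 0 := by
  rw [Ew, lie_onL_Uoff, lie_eMulV_UoffL, dualf_tau, dualf_tau, if_neg (idx1_ne_idxw i),
    if_neg (idx2_ne_idxw j), zero_smul, zero_smul, sub_zero, onL, lTensor_zero]

theorem lie_Iw_Uoff (i j : Fin n) : ⁅Iw n, Uoff n i j⁆ = 0 := by
  rw [Iw, lie_onL_Uoff, lie_iMulF_UoffL, dualf_tau, dualf_tau, if_neg (idx2_ne_idxw i).symm,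
    if_neg (idx1_ne_idxw j).symm, zero_smul, zero_smul, sub_zero, onL, lTensor_zero]

def thetaMix (t : ℝ) (p q : Fin n) : PL n →ₗ[ℂ] PL n :=
  (-(Complex.I * (Real.sqrt t : ℝ))) • (E1 n q ∘ₗ Astar n p + E2 n p ∘ₗ A n q)
    - Complex.I • (E1 n q ∘ₗ E2 n p ∘ₗ Iw n)

theorem theta_eq_thetaMix (t : ℝ) (k : Fin n) : theta n t k = thetaMix t k k := rfl

theorem lie_thetaMix_Uoff (t : ℝ) (p q i j : Fin n) :
    ⁅thetaMix t p q, Uoff n i j⁆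
      = (if i = q then 1 else 0 : ℂ) • thetaMix t p j
        - (if p = j then 1 else 0 : ℂ) • thetaMix t i q := by
  simp only [thetaMix, ← Module.End.mul_eq_comp, Module.End.sub_lie, Module.End.add_lie,
    Module.End.smul_lie, Module.End.mul_lie, lie_A_Uoff, lie_Astar_Uoff, lie_E1_Uoff,
    lie_E2_Uoff, lie_Iw_Uoff]
  simp only [Module.End.mul_eq_comp, LinearMap.comp_add, LinearMap.comp_neg,
    LinearMap.neg_comp, LinearMap.comp_smul, LinearMap.smul_comp, LinearMap.comp_zero]
  module

theorem sum_lie_theta_Uoff (t : ℝ) (i j : Fin n) : ∑ k, ⁅theta n t k, Uoff n i j⁆ = 0 := by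
  simp only [theta_eq_thetaMix, lie_thetaMix_Uoff, ite_smul, one_smul, zero_smul]
  refine (Finset.sum_sub_distrib (G := Module.End ℂ (PL n)) _ _).trans ?_
  simp only [Finset.sum_ite_eq, Finset.sum_ite_eq', Finset.mem_univ, if_true]
  exact sub_self _

end Commutators

theorem dOp_commutes_with_Uoff_general (n : ℕ) (t : ℝ) (i j : Fin n) :
    dOp n t ∘ₗ Uoff n i j = Uoff n i j ∘ₗ dOp n t := by
  have h : ⁅dOp n t, Uoff n i j⁆ = 0 := by
    rw [dOp, Module.End.sub_lie, Module.End.smul_lie, lie_Ew_Uoff, Module.End.sum_lie,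
      sum_lie_theta_Uoff]
    module
  exact sub_eq_zero.mp h

/-- For every `t > 0` and all `i ≠ j`, the operators `d(t)` and the transposition operator
`U_{ij}` on `P_n ⊗ Λ` commute. -/
theorem dOp_commutes_with_Uoff (n : ℕ) (hn : 1 ≤ n) (t : ℝ) (ht : 0 < t)
    (i j : Fin n) (hij : i ≠ j) :
    dOp n t ∘ₗ Uoff n i j = Uoff n i j ∘ₗ dOp n t :=
  dOp_commutes_with_Uoff_general n t i j

end HeisenbergModel
end
end
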